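/- arXiv:quant-ph/0412053 — 5 statements merged into one kernel-verified Lean document; each statement's English description precedes it below -/
import Mathlib

section
/- Let ρ be a positive definite density matrix on a finite-dimensional Hilbert space, let (ρ_N^(1)) and (ρ_N^(2)) be two sequences of density matrices both converging to ρ in trace norm, and let 0 < λ < 1. Then there exists N_λ ∈ ℕ and a sequence (σ_N) of density matrices such that ρ_N^(1) = λ ρ_N^(2) + (1−λ) σ_N for all N > N_λ. -/
/-!
Let `κ > 0` be a lower bound for the spectrum of `ρ`, so `κ • 1 ≤ ρ`. Every Hermitian `H` satisfies
`-‖H‖₁ • 1 ≤ H`, since each eigenvalue is bounded in absolute value by the sum of all of them. Hence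
`ρ₁ - λ ρ₂ = (1 - λ) ρ + (ρ₁ - ρ) + λ (ρ - ρ₂) ≥ ((1 - λ) κ - ‖ρ₁ - ρ‖₁ - λ ‖ρ₂ - ρ‖₁) • 1`,
which is positive semidefinite for large `N`, and then `σ = (ρ₁ - λ ρ₂) / (1 - λ)` is a density matrix.
-/

open Matrix Filter ComplexOrder

/-- The trace norm of a complex matrix: `‖A‖₁ = tr √(Aᴴ A)`. -/
noncomputable def traceNorm {d : ℕ} (A : Matrix (Fin d) (Fin d) ℂ) : ℝ :=
  (((Matrix.posSemidef_conjTranspose_mul_self A).1.eigenvectorUnitary : Matrix (Fin d) (Fin d) ℂ) *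
    diagonal (((↑) : ℝ → ℂ) ∘ Real.sqrt ∘ (Matrix.posSemidef_conjTranspose_mul_self A).1.eigenvalues) *
    (star (Matrix.posSemidef_conjTranspose_mul_self A).1.eigenvectorUnitary :
      Matrix (Fin d) (Fin d) ℂ)).trace.re

/-- A density matrix: positive semidefinite with trace one. -/
def IsDensityMatrix {d : ℕ} (ρ : Matrix (Fin d) (Fin d) ℂ) : Prop :=
  ρ.PosSemidef ∧ ρ.trace = 1

open scoped MatrixOrder

variable {d : ℕ}

lemma traceNorm_eq_re_trace_cfc_sqrt (A : Matrix (Fin d) (Fin d) ℂ) :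
    traceNorm A = (cfc Real.sqrt (Aᴴ * A)).trace.re := by
  rw [(posSemidef_conjTranspose_mul_self A).1.cfc_eq, IsHermitian.cfc,
    Unitary.conjStarAlgAut_apply]
  rfl

lemma traceNorm_neg (A : Matrix (Fin d) (Fin d) ℂ) : traceNorm (-A) = traceNorm A := by
  simp only [traceNorm_eq_re_trace_cfc_sqrt, conjTranspose_neg, neg_mul_neg]

lemma Matrix.IsHermitian.traceNorm_eq_sum_abs_eigenvalues {A : Matrix (Fin d) (Fin d) ℂ}
    (hA : A.IsHermitian) : traceNorm A = ∑ i, |hA.eigenvalues i| := by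
  have hsq : Aᴴ * A = cfc (fun x : ℝ => x ^ 2) A := by
    rw [cfc_pow_id A 2 hA.isSelfAdjoint, hA.eq, sq]
  rw [traceNorm_eq_re_trace_cfc_sqrt, hsq, ← cfc_comp' Real.sqrt (fun x : ℝ => x ^ 2) A]
  simp_rw [Real.sqrt_sq_eq_abs]
  rw [hA.cfc_eq, IsHermitian.cfc, Unitary.conjStarAlgAut_apply, trace_mul_cycle,
    Matrix.UnitaryGroup.star_mul_self, Matrix.one_mul, trace_diagonal]
  simp

lemma Matrix.IsHermitian.abs_eigenvalues_le_traceNorm {A : Matrix (Fin d) (Fin d) ℂ}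
    (hA : A.IsHermitian) (i : Fin d) : |hA.eigenvalues i| ≤ traceNorm A := by
  rw [hA.traceNorm_eq_sum_abs_eigenvalues]
  exact Finset.single_le_sum (fun j _ => abs_nonneg (hA.eigenvalues j)) (Finset.mem_univ i)

lemma Matrix.IsHermitian.algebraMap_neg_traceNorm_le {A : Matrix (Fin d) (Fin d) ℂ}
    (hA : A.IsHermitian) : algebraMap ℝ _ (-traceNorm A) ≤ A := by
  rw [algebraMap_le_iff_le_spectrum hA.isSelfAdjoint, hA.spectrum_real_eq_range_eigenvalues]
  rintro _ ⟨i, rfl⟩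
  exact neg_le_of_abs_le (hA.abs_eigenvalues_le_traceNorm i)

lemma Matrix.PosDef.exists_pos_algebraMap_le {𝕜 n : Type*} [RCLike 𝕜] [Fintype n]
    [DecidableEq n] {A : Matrix n n 𝕜} (hA : A.PosDef) : ∃ κ > 0, algebraMap ℝ _ κ ≤ A := by
  cases isEmpty_or_nonempty n
  · exact ⟨1, one_pos, le_of_eq (Subsingleton.elim _ _)⟩
  · exact (CFC.exists_pos_algebraMap_le_iff hA.isHermitian.isSelfAdjoint).2 fun _ hx =>
      hA.isStrictlyPositive.spectrum_pos hx

lemma posSemidef_sub_smul_of_traceNorm_le {ρ ρ₁ ρ₂ : Matrix (Fin d) (Fin d) ℂ} {κ lam : ℝ}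
    (hρ : ρ.IsHermitian) (hρ₁ : ρ₁.IsHermitian) (hρ₂ : ρ₂.IsHermitian) (hκ : algebraMap ℝ _ κ ≤ ρ)
    (hlam0 : 0 ≤ lam) (hlam1 : lam ≤ 1)
    (hsmall : traceNorm (ρ₁ - ρ) + lam * traceNorm (ρ₂ - ρ) ≤ (1 - lam) * κ) :
    (ρ₁ - (lam : ℂ) • ρ₂).PosSemidef := by
  set t₁ := traceNorm (ρ₁ - ρ)
  set t₂ := traceNorm (ρ₂ - ρ)
  have ht₂ : t₂ = traceNorm (ρ - ρ₂) := by rw [← traceNorm_neg, neg_sub]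
  rw [← sub_zero (_ - _), ← le_iff, Complex.coe_smul]
  calc (0 : Matrix (Fin d) (Fin d) ℂ)
      ≤ algebraMap ℝ _ ((1 - lam) * κ - t₁ - lam * t₂) := algebraMap_nonneg _ (by linarith)
    _ = (1 - lam) • algebraMap ℝ _ κ + algebraMap ℝ _ (-t₁) + lam • algebraMap ℝ _ (-t₂) := by
      simp only [Algebra.algebraMap_eq_smul_one]; module
    _ ≤ (1 - lam) • ρ + (ρ₁ - ρ) + lam • (ρ - ρ₂) := by
      gcongr ?_ + ?_ + ?_
      · exact smul_le_smul_of_nonneg_left hκ (by linarith)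
      · exact (hρ₁.sub hρ).algebraMap_neg_traceNorm_le
      · exact smul_le_smul_of_nonneg_left (ht₂ ▸ (hρ.sub hρ₂).algebraMap_neg_traceNorm_le) hlam0
    _ = ρ₁ - lam • ρ₂ := by module

lemma IsDensityMatrix.exists_eq_smul_add_smul {A B : Matrix (Fin d) (Fin d) ℂ}
    (hA : IsDensityMatrix A) (hB : IsDensityMatrix B) {lam : ℝ} (hlam1 : lam < 1)
    (hAB : (A - (lam : ℂ) • B).PosSemidef) :
    ∃ σ, IsDensityMatrix σ ∧ A = (lam : ℂ) • B + ((1 - lam : ℝ) : ℂ) • σ := by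
  have hne : ((1 - lam : ℝ) : ℂ) ≠ 0 := Complex.ofReal_ne_zero.2 (sub_ne_zero.2 hlam1.ne')
  refine ⟨((1 - lam : ℝ) : ℂ)⁻¹ • (A - (lam : ℂ) • B), ⟨hAB.smul ?_, ?_⟩, ?_⟩
  · rw [← Complex.ofReal_inv, Complex.zero_le_real, inv_nonneg, sub_nonneg]
    exact hlam1.le
  · rw [trace_smul, trace_sub, trace_smul, hA.2, hB.2, smul_eq_mul, smul_eq_mul, mul_one]
    push_cast at hne ⊢
    exact inv_mul_cancel₀ hne
  · rw [smul_smul, mul_inv_cancel₀ hne, one_smul, add_sub_cancel]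

theorem density_matrix_convex_decomposition_general
    {d : ℕ} (ρ : Matrix (Fin d) (Fin d) ℂ)
    (hρ : ρ.PosDef)
    (ρ₁ ρ₂ : ℕ → Matrix (Fin d) (Fin d) ℂ)
    (h₁ : ∀ N, IsDensityMatrix (ρ₁ N)) (h₂ : ∀ N, IsDensityMatrix (ρ₂ N))
    (hlim₁ : Tendsto (fun N => traceNorm (ρ₁ N - ρ)) atTop (nhds 0))
    (hlim₂ : Tendsto (fun N => traceNorm (ρ₂ N - ρ)) atTop (nhds 0))
    (lam : ℝ) (hlam0 : 0 < lam) (hlam1 : lam < 1) :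
    ∃ (Nlam : ℕ) (σ : ℕ → Matrix (Fin d) (Fin d) ℂ),
      (∀ N, IsDensityMatrix (σ N)) ∧
      ∀ N > Nlam, ρ₁ N = (lam : ℂ) • ρ₂ N + ((1 - lam : ℝ) : ℂ) • σ N := by
  obtain ⟨κ, hκ, hκρ⟩ := hρ.exists_pos_algebraMap_le
  have hlim : Tendsto (fun N => traceNorm (ρ₁ N - ρ) + lam * traceNorm (ρ₂ N - ρ))
      atTop (nhds 0) := by
    simpa using hlim₁.add (hlim₂.const_mul lam)
  obtain ⟨N₀, hN₀⟩ := eventually_atTop.1 <|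
    hlim.eventually (ge_mem_nhds (mul_pos (sub_pos.2 hlam1) hκ))
  have hdecomp : ∀ N, ∃ σ, IsDensityMatrix σ ∧
      (N > N₀ → ρ₁ N = (lam : ℂ) • ρ₂ N + ((1 - lam : ℝ) : ℂ) • σ) := by
    intro N
    by_cases hN : N > N₀
    · obtain ⟨σ, hσ, hρ₁σ⟩ := (h₁ N).exists_eq_smul_add_smul (h₂ N) hlam1 <|
        posSemidef_sub_smul_of_traceNorm_le hρ.isHermitian (h₁ N).1.isHermitian
          (h₂ N).1.isHermitian hκρ hlam0.le hlam1.le (hN₀ N hN.le)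
      exact ⟨σ, hσ, fun _ => hρ₁σ⟩
    · exact ⟨ρ₁ N, h₁ N, fun h => absurd h hN⟩
  choose σ hσ hρ₁σ using hdecomp
  exact ⟨N₀, σ, hσ, hρ₁σ⟩

/-- if `ρ` is a positive definite density matrix and `ρ₁ N`, `ρ₂ N` are sequences of
density matrices converging to `ρ` in trace norm, then for each `0 < λ < 1` there is `N_λ` and a
sequence `σ N` of density matrices with `ρ₁ N = λ • ρ₂ N + (1 - λ) • σ N` for all `N > N_λ`. -/
theorem density_matrix_convex_decomposition
    {d : ℕ} (ρ : Matrix (Fin d) (Fin d) ℂ)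
    (hρ : ρ.PosDef) (hρtr : ρ.trace = 1)
    (ρ₁ ρ₂ : ℕ → Matrix (Fin d) (Fin d) ℂ)
    (h₁ : ∀ N, IsDensityMatrix (ρ₁ N)) (h₂ : ∀ N, IsDensityMatrix (ρ₂ N))
    (hlim₁ : Tendsto (fun N => traceNorm (ρ₁ N - ρ)) atTop (nhds 0))
    (hlim₂ : Tendsto (fun N => traceNorm (ρ₂ N - ρ)) atTop (nhds 0))
    (lam : ℝ) (hlam0 : 0 < lam) (hlam1 : lam < 1) :
    ∃ (Nlam : ℕ) (σ : ℕ → Matrix (Fin d) (Fin d) ℂ),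
      (∀ N, IsDensityMatrix (σ N)) ∧
      ∀ N > Nlam, ρ₁ N = (lam : ℂ) • ρ₂ N + ((1 - lam : ℝ) : ℂ) • σ N :=
  density_matrix_convex_decomposition_general ρ hρ ρ₁ ρ₂ h₁ h₂ hlim₁ hlim₂ lam hlam0 hlam1
end

section
/- The function Î is well defined: if U₁, U₂ are unitaries with U₁ ρ_x U₁* = U₂ ρ_x U₂* (equivalently, if U = U₂⁻¹U₁ commutes with ρ_x), then ∑_{j=1}^d (x_j − x_{j+1}) ln pm_j(U₁*ρU₁) = ∑_{j=1}^d (x_j − x_{j+1}) ln pm_j(U₂*ρU₂) for every positive definite density matrix ρ. -/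
/-!
A unitary `U` commuting with `ρ_x` can only mix coordinates carrying equal entries of `x`. If
`x_j > x_{j+1}`, it therefore maps the span of the first `j` coordinates into itself, so its
compression `P` to these coordinates satisfies `Pᴴ P = 1`, and the `j`-th principal minor of
`Uᴴ A U` is `det (Pᴴ A_j P) = det A_j`, where `A_j` is the leading `j × j` block of `A`. The
terms with `x_j = x_{j+1}` vanish anyway.
-/

open Matrix ComplexOrder Finset

/-- The upper-left `k × k` principal minor of a `d × d` matrix (for `k ≤ d`;
defined via `min k d` so that no side condition is needed). -/
def pm {d : ℕ} (k : ℕ) (A : Matrix (Fin d) (Fin d) ℂ) : ℂ :=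
  (A.submatrix (fun i : Fin (min k d) => Fin.castLE (min_le_right k d) i)
    (fun i : Fin (min k d) => Fin.castLE (min_le_right k d) i)).det

theorem Unitary.commute_star_mul_of_conj_eq {R : Type*} [Monoid R] [StarMul R] {u₁ u₂ a : R}
    (hu₁ : u₁ ∈ unitary R) (hu₂ : u₂ ∈ unitary R) (h : u₁ * a * star u₁ = u₂ * a * star u₂) :
    Commute (star u₂ * u₁) a :=
  calc star u₂ * u₁ * a
      = star u₂ * (u₁ * a * star u₁) * u₁ := by
        simp only [mul_assoc, Unitary.star_mul_self_of_mem hu₁, mul_one]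
    _ = star u₂ * (u₂ * a * star u₂) * u₁ := by rw [h]
    _ = a * (star u₂ * u₁) := by
        simp only [← mul_assoc, Unitary.star_mul_self_of_mem hu₂, one_mul]

namespace Matrix

variable {R ι l m n o p : Type*}

theorem apply_eq_zero_of_commute_diagonal [CommRing R] [NoZeroDivisors R] [Fintype n]
    [DecidableEq n] {U : Matrix n n R} {v : n → R} (hU : Commute U (diagonal v)) {a b : n}
    (hab : v a ≠ v b) : U a b = 0 := by
  have hentry : U a b * v b = v a * U a b := by
    simpa only [mul_diagonal, diagonal_mul] using congrFun (congrFun hU.eq a) b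
  have : (v a - v b) * U a b = 0 := by linear_combination -hentry
  exact (mul_eq_zero.mp this).resolve_left (sub_ne_zero.mpr hab)

theorem submatrix_mul_of_forall_notMem_range [NonUnitalNonAssocSemiring R] [Fintype n]
    [Fintype p] (A : Matrix l n R) (B : Matrix n o R) (f : m → l) {e : p → n}
    (he : Function.Injective e) (g : ι → o)
    (h : ∀ i j, ∀ a ∉ Set.range e, A (f i) a * B a (g j) = 0) :
    (A * B).submatrix f g = A.submatrix f e * B.submatrix e g := by
  ext i j
  exact (Fintype.sum_of_injective e he _ _ (h i j) fun _ => rfl).symm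

theorem det_submatrix_conjTranspose_mul_mul [CommRing R] [StarRing R] [Fintype n]
    [DecidableEq n] [Fintype m] [DecidableEq m] (A : Matrix n n R) {U : Matrix n n R}
    (hU : U ∈ unitaryGroup n R) {e : m → n} (he : Function.Injective e)
    (hinv : ∀ a ∉ Set.range e, ∀ i, U a (e i) = 0) :
    ((Uᴴ * A * U).submatrix e e).det = (A.submatrix e e).det := by
  set P := U.submatrix e e
  have hcol : ∀ M : Matrix n n R, (M * U).submatrix e e = M.submatrix e e * P :=
    fun M => submatrix_mul_of_forall_notMem_range M U e he e
      fun i j a ha => by rw [hinv a ha j, mul_zero]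
  have hrow : ∀ M : Matrix n n R, (Uᴴ * M).submatrix e e = Pᴴ * M.submatrix e e := by
    intro M
    rw [submatrix_mul_of_forall_notMem_range Uᴴ M e he e
      fun i j a ha => by rw [conjTranspose_apply, hinv a ha i, star_zero, zero_mul],
      conjTranspose_submatrix]
  have hP : Pᴴ * P = 1 := by
    rw [← hrow, ← star_eq_conjTranspose, (mem_unitaryGroup_iff').mp hU, submatrix_one e he]
  calc ((Uᴴ * A * U).submatrix e e).det
      = (Pᴴ * P).det * (A.submatrix e e).det := by
        rw [hcol, hrow, det_mul, det_mul, det_mul]; ring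
    _ = (A.submatrix e e).det := by rw [hP, det_one, one_mul]

end Matrix

theorem pm_conjTranspose_mul_mul {d k : ℕ} (A : Matrix (Fin d) (Fin d) ℂ)
    {U : Matrix (Fin d) (Fin d) ℂ} (hU : U ∈ unitaryGroup (Fin d) ℂ)
    (hinv : ∀ a b : Fin d, (b : ℕ) < k → k ≤ (a : ℕ) → U a b = 0) :
    pm k (Uᴴ * A * U) = pm k A := by
  refine det_submatrix_conjTranspose_mul_mul A hU (Fin.castLE_injective _) fun a ha i => ?_
  refine hinv a _ (i.isLt.trans_le (min_le_left k d)) ?_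
  by_contra! hak
  exact ha ⟨⟨a, lt_min hak a.isLt⟩, rfl⟩

theorem rate_function_well_defined_general
    {d : ℕ} (ρ : Matrix (Fin d) (Fin d) ℂ)
    (x : ℕ → ℝ) (hxmono : ∀ i j, i ≤ j → j < d → x j ≤ x i)
    (U₁ U₂ : Matrix (Fin d) (Fin d) ℂ)
    (hU₁ : U₁ ∈ Matrix.unitaryGroup (Fin d) ℂ) (hU₂ : U₂ ∈ Matrix.unitaryGroup (Fin d) ℂ)
    (hsame : U₁ * Matrix.diagonal (fun i : Fin d => (x i.1 : ℂ)) * U₁ᴴ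
           = U₂ * Matrix.diagonal (fun i : Fin d => (x i.1 : ℂ)) * U₂ᴴ) :
    ∑ j ∈ range d, (x j - x (j + 1)) * Real.log ((pm (j + 1) (U₁ᴴ * ρ * U₁)).re)
      = ∑ j ∈ range d, (x j - x (j + 1)) * Real.log ((pm (j + 1) (U₂ᴴ * ρ * U₂)).re) := by
  set U := U₂ᴴ * U₁
  have hU : U ∈ unitaryGroup (Fin d) ℂ := mul_mem (Unitary.star_mem hU₂) hU₁
  have hcomm := Unitary.commute_star_mul_of_conj_eq hU₁ hU₂ hsame
  have hconj : U₁ᴴ * ρ * U₁ = Uᴴ * (U₂ᴴ * ρ * U₂) * U := by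
    have h₂ : U₂ * U₂ᴴ = 1 := (mem_unitaryGroup_iff).mp hU₂
    simp only [U, conjTranspose_mul, conjTranspose_conjTranspose, ← mul_assoc]
    rw [mul_assoc _ U₂ U₂ᴴ, h₂, mul_one, mul_assoc _ U₂ U₂ᴴ, h₂, mul_one]
  refine Finset.sum_congr rfl fun j _ => ?_
  rcases eq_or_ne (x j) (x (j + 1)) with hxj | hxj
  · rw [hxj, sub_self, zero_mul, zero_mul]
  congr 3
  rw [hconj]
  refine pm_conjTranspose_mul_mul _ hU fun a b hb ha => ?_
  refine apply_eq_zero_of_commute_diagonal hcomm fun hab => hxj ?_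
  have hjd : j + 1 < d := ha.trans_lt a.isLt
  have hgap := hxmono j (j + 1) j.le_succ hjd
  have hxa := hxmono (j + 1) a ha a.isLt
  have hxb := hxmono b j (Nat.lt_succ_iff.mp hb) (by omega)
  have hxab : x a = x b := by exact_mod_cast hab
  linarith

/-- well-definedness of `Î`: if `x` is a decreasingly ordered probability
vector (with `x d = 0` as the convention `x_{d+1} = 0`), `ρ` a positive definite density
matrix, and `U₁, U₂` unitaries with `U₁ ρ_x U₁ᴴ = U₂ ρ_x U₂ᴴ`, then
`∑_j (x_j − x_{j+1}) ln pm_j(U₁ᴴ ρ U₁) = ∑_j (x_j − x_{j+1}) ln pm_j(U₂ᴴ ρ U₂)`. -/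
theorem rate_function_well_defined
    {d : ℕ} (ρ : Matrix (Fin d) (Fin d) ℂ)
    (hρ : ρ.PosDef) (hρtr : ρ.trace = 1)
    (x : ℕ → ℝ) (hxmono : ∀ i j, i ≤ j → j < d → x j ≤ x i)
    (hxnn : ∀ j, j < d → 0 ≤ x j) (hxd : x d = 0)
    (hxsum : ∑ j ∈ range d, x j = 1)
    (U₁ U₂ : Matrix (Fin d) (Fin d) ℂ)
    (hU₁ : U₁ ∈ Matrix.unitaryGroup (Fin d) ℂ) (hU₂ : U₂ ∈ Matrix.unitaryGroup (Fin d) ℂ)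
    (hsame : U₁ * Matrix.diagonal (fun i : Fin d => (x i.1 : ℂ)) * U₁ᴴ
           = U₂ * Matrix.diagonal (fun i : Fin d => (x i.1 : ℂ)) * U₂ᴴ) :
    ∑ j ∈ range d, (x j - x (j + 1)) * Real.log ((pm (j + 1) (U₁ᴴ * ρ * U₁)).re)
      = ∑ j ∈ range d, (x j - x (j + 1)) * Real.log ((pm (j + 1) (U₂ᴴ * ρ * U₂)).re) :=
  rate_function_well_defined_general ρ x hxmono U₁ U₂ hU₁ hU₂ hsame
end

section
/- For two qubit density matrices ρ = ½(𝟙 + x⃗·σ⃗) and σ = ½(𝟙 + y⃗·σ⃗) with Bloch vectors x⃗, y⃗ ∈ ℝ³, |x⃗| < 1, |y⃗| ≤ 1, the rate function satisfies Î(ρ,σ) = −S(σ) − |y⃗| ln[(1 + |x⃗| cos θ)/2] − ((1 − |y⃗|)/2) ln[(1 − |x⃗|²)/4], where θ is the angle between x⃗ and y⃗ (with x⃗·y⃗ = |x⃗||y⃗|cos θ) and S(σ) is the von Neumann entropy of σ. -/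
open Matrix ComplexOrder Real

/-- The Pauli matrices σ₁, σ₂, σ₃. -/
def pauli : Fin 3 → Matrix (Fin 2) (Fin 2) ℂ :=
  ![!![0, 1; 1, 0], !![0, -Complex.I; Complex.I, 0], !![1, 0; 0, -1]]

/-- The qubit density matrix with Bloch vector `v`: `½(𝟙 + v⃗·σ⃗)`. -/
noncomputable def bloch (v : EuclideanSpace ℝ (Fin 3)) : Matrix (Fin 2) (Fin 2) ℂ :=
  (1 / 2 : ℂ) • (1 + ∑ i : Fin 3, (v i : ℂ) • pauli i)

/-!
Conjugating by `U` turns `σ` into `diag(x₁, x₂)` and leaves traces and determinants alone. Hence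
`pm₂(Uᴴ ρ U) = det ρ = (1 - |x⃗|²)/4`, while the entry `p = (Uᴴ ρ U)₀₀` is pinned down by
`tr(ρσ) = (1 + x⃗·y⃗)/2 = x₁ p + x₂ (1 - p)`, i.e. `|y⃗| p = (x⃗·y⃗ + |y⃗|)/2 = |y⃗| (1 + |x⃗| cos θ)/2`.
Since `ln pm₁` enters with the coefficient `x₁ - x₂ = |y⃗|`, the case `y⃗ = 0` needs no value of `p`.
-/

namespace Matrix

section UnitaryConj

variable {n R : Type*} [Fintype n] [DecidableEq n] [CommRing R] [StarRing R]
  {U : Matrix n n R}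

lemma conjTranspose_mul_self_of_mem_unitaryGroup (hU : U ∈ unitaryGroup n R) : Uᴴ * U = 1 :=
  mem_unitaryGroup_iff'.mp hU

lemma mul_conjTranspose_self_of_mem_unitaryGroup (hU : U ∈ unitaryGroup n R) : U * Uᴴ = 1 :=
  mem_unitaryGroup_iff.mp hU

lemma unitary_conj_mul_unitary_conj (hU : U ∈ unitaryGroup n R) (A B : Matrix n n R) :
    (Uᴴ * A * U) * (Uᴴ * B * U) = Uᴴ * (A * B) * U := by
  simp only [Matrix.mul_assoc]
  rw [← Matrix.mul_assoc U, mul_conjTranspose_self_of_mem_unitaryGroup hU, Matrix.one_mul]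

lemma unitary_conj_unitary_conj_inv (hU : U ∈ unitaryGroup n R) (D : Matrix n n R) :
    Uᴴ * (U * D * Uᴴ) * U = D := by
  simp only [Matrix.mul_assoc]
  rw [conjTranspose_mul_self_of_mem_unitaryGroup hU, Matrix.mul_one, ← Matrix.mul_assoc,
    conjTranspose_mul_self_of_mem_unitaryGroup hU, Matrix.one_mul]

lemma trace_unitary_conj (hU : U ∈ unitaryGroup n R) (A : Matrix n n R) :
    (Uᴴ * A * U).trace = A.trace := by
  rw [trace_mul_cycle, mul_conjTranspose_self_of_mem_unitaryGroup hU, Matrix.one_mul]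

lemma det_unitary_conj (hU : U ∈ unitaryGroup n R) (A : Matrix n n R) :
    (Uᴴ * A * U).det = A.det := by
  rw [det_mul, det_mul, mul_right_comm, ← det_mul,
    conjTranspose_mul_self_of_mem_unitaryGroup hU, det_one, one_mul]

end UnitaryConj

lemma trace_mul_diagonal_fin_two {R : Type*} [CommRing R] (M : Matrix (Fin 2) (Fin 2) R)
    (a b : R) (hM : M.trace = 1) : (M * diagonal ![a, b]).trace = b + (a - b) * M 0 0 := by
  rw [trace_fin_two] at hM ⊢
  simp only [mul_diagonal, Matrix.cons_val_zero, Matrix.cons_val_one]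
  linear_combination b * hM

end Matrix

lemma pm_one {d : ℕ} (A : Matrix (Fin (d + 1)) (Fin (d + 1)) ℂ) : pm 1 A = A 0 0 :=
  det_fin_one _

lemma pm_self {d : ℕ} (A : Matrix (Fin d) (Fin d) ℂ) : pm d A = A.det :=
  det_submatrix_equiv_self (finCongr (min_self d)) A

lemma bloch_eq_of (v : EuclideanSpace ℝ (Fin 3)) :
    bloch v = !![(1 + (v 2 : ℂ)) / 2, ((v 0 : ℂ) - v 1 * Complex.I) / 2;
                 ((v 0 : ℂ) + v 1 * Complex.I) / 2, (1 - (v 2 : ℂ)) / 2] := by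
  ext i j
  fin_cases i <;> fin_cases j <;>
    simp [bloch, pauli, Fin.sum_univ_three] <;> ring

lemma trace_bloch (v : EuclideanSpace ℝ (Fin 3)) : (bloch v).trace = 1 := by
  rw [bloch_eq_of, trace_fin_two_of]; ring

lemma det_bloch (v : EuclideanSpace ℝ (Fin 3)) :
    (bloch v).det = (((1 - ‖v‖ ^ 2) / 4 : ℝ) : ℂ) := by
  rw [EuclideanSpace.real_norm_sq_eq, Fin.sum_univ_three, bloch_eq_of, det_fin_two_of]
  push_cast
  linear_combination ((v 1 : ℂ) ^ 2 / 4) * Complex.I_sq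

lemma trace_bloch_mul_bloch (x y : EuclideanSpace ℝ (Fin 3)) :
    (bloch x * bloch y).trace = (((1 + ∑ i, x i * y i) / 2 : ℝ) : ℂ) := by
  rw [bloch_eq_of, bloch_eq_of, trace_fin_two]
  simp only [mul_apply, Fin.sum_univ_two, of_apply, cons_val', cons_val_zero, cons_val_one,
    empty_val', cons_val_fin_one, Fin.sum_univ_three]
  push_cast
  linear_combination (-(x 1 : ℂ) * y 1 / 2) * Complex.I_sq

lemma norm_mul_unitary_conj_bloch_zero_zero (x y : EuclideanSpace ℝ (Fin 3))
    {U : Matrix (Fin 2) (Fin 2) ℂ} (hU : U ∈ unitaryGroup (Fin 2) ℂ)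
    (hσ : bloch y = U * diagonal ![(((1 + ‖y‖) / 2 : ℝ) : ℂ), (((1 - ‖y‖) / 2 : ℝ) : ℂ)] * Uᴴ) :
    (‖y‖ : ℂ) * (Uᴴ * bloch x * U) 0 0 = (((∑ i, x i * y i + ‖y‖) / 2 : ℝ) : ℂ) := by
  have htrace := trace_bloch_mul_bloch x y
  rw [← trace_unitary_conj hU, ← unitary_conj_mul_unitary_conj hU, hσ,
    unitary_conj_unitary_conj_inv hU,
    trace_mul_diagonal_fin_two _ _ _ ((trace_unitary_conj hU _).trans (trace_bloch x))] at htrace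
  push_cast at htrace ⊢
  linear_combination htrace

lemma re_unitary_conj_bloch_zero_zero (x y : EuclideanSpace ℝ (Fin 3)) (hy : ‖y‖ ≠ 0) {θ : ℝ}
    (hθ : ∑ i, x i * y i = ‖x‖ * ‖y‖ * Real.cos θ)
    {U : Matrix (Fin 2) (Fin 2) ℂ} (hU : U ∈ unitaryGroup (Fin 2) ℂ)
    (hσ : bloch y = U * diagonal ![(((1 + ‖y‖) / 2 : ℝ) : ℂ), (((1 - ‖y‖) / 2 : ℝ) : ℂ)] * Uᴴ) :
    ((Uᴴ * bloch x * U) 0 0).re = (1 + ‖x‖ * Real.cos θ) / 2 := by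
  have hentry := congrArg Complex.re (norm_mul_unitary_conj_bloch_zero_zero x y hU hσ)
  rw [Complex.re_ofReal_mul, Complex.ofReal_re, hθ] at hentry
  refine mul_left_cancel₀ hy (hentry.trans ?_)
  ring

theorem qubit_rate_function_formula_general
    (xv yv : EuclideanSpace ℝ (Fin 3))
    (θ : ℝ) (hθ : ∑ i : Fin 3, xv i * yv i = ‖xv‖ * ‖yv‖ * Real.cos θ)
    (U : Matrix (Fin 2) (Fin 2) ℂ) (hU : U ∈ Matrix.unitaryGroup (Fin 2) ℂ)
    (hσ : bloch yv
        = U * Matrix.diagonal ![(((1 + ‖yv‖) / 2 : ℝ) : ℂ), (((1 - ‖yv‖) / 2 : ℝ) : ℂ)] * Uᴴ) :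
    (1 + ‖yv‖) / 2 * Real.log ((1 + ‖yv‖) / 2)
      + (1 - ‖yv‖) / 2 * Real.log ((1 - ‖yv‖) / 2)
      - ((1 + ‖yv‖) / 2 - (1 - ‖yv‖) / 2) * Real.log ((pm 1 (Uᴴ * bloch xv * U)).re)
      - (1 - ‖yv‖) / 2 * Real.log ((pm 2 (Uᴴ * bloch xv * U)).re)
    = -(-((1 + ‖yv‖) / 2 * Real.log ((1 + ‖yv‖) / 2)
          + (1 - ‖yv‖) / 2 * Real.log ((1 - ‖yv‖) / 2)))
      - ‖yv‖ * Real.log ((1 + ‖xv‖ * Real.cos θ) / 2)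
      - (1 - ‖yv‖) / 2 * Real.log ((1 - ‖xv‖ ^ 2) / 4) := by
  have hpm2 : (pm 2 (Uᴴ * bloch xv * U)).re = (1 - ‖xv‖ ^ 2) / 4 := by
    rw [pm_self, det_unitary_conj hU, det_bloch, Complex.ofReal_re]
  have hpm1 : ‖yv‖ * Real.log (pm 1 (Uᴴ * bloch xv * U)).re
      = ‖yv‖ * Real.log ((1 + ‖xv‖ * Real.cos θ) / 2) := by
    rcases eq_or_ne ‖yv‖ 0 with hy | hy
    · simp [hy]
    · rw [pm_one, re_unitary_conj_bloch_zero_zero xv yv hy hθ hU hσ]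
  rw [show (1 + ‖yv‖) / 2 - (1 - ‖yv‖) / 2 = ‖yv‖ by ring, hpm1, hpm2]
  ring

/-- for qubit states `ρ, σ` with Bloch vectors `x⃗, y⃗` (`|x⃗| < 1`, `|y⃗| ≤ 1`),
writing `σ = U ρ_x Uᴴ` with `x = ((1+|y⃗|)/2, (1−|y⃗|)/2)` the ordered spectrum of `σ` and
`U` unitary, the rate function `Î(ρ,σ)` (expressed through the principal minors of `Uᴴ ρ U`)
equals `−S(σ) − |y⃗| ln[(1+|x⃗| cos θ)/2] − ((1−|y⃗|)/2) ln[(1−|x⃗|²)/4]`, where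
`θ` is the angle between the Bloch vectors and `S(σ) = −∑ x_k ln x_k` is the
von Neumann entropy of `σ`. -/
theorem qubit_rate_function_formula
    (xv yv : EuclideanSpace ℝ (Fin 3)) (hx : ‖xv‖ < 1) (hy : ‖yv‖ ≤ 1)
    (θ : ℝ) (hθ : ∑ i : Fin 3, xv i * yv i = ‖xv‖ * ‖yv‖ * Real.cos θ)
    (U : Matrix (Fin 2) (Fin 2) ℂ) (hU : U ∈ Matrix.unitaryGroup (Fin 2) ℂ)
    (hσ : bloch yv
        = U * Matrix.diagonal ![(((1 + ‖yv‖) / 2 : ℝ) : ℂ), (((1 - ‖yv‖) / 2 : ℝ) : ℂ)] * Uᴴ) :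
    (1 + ‖yv‖) / 2 * Real.log ((1 + ‖yv‖) / 2)
      + (1 - ‖yv‖) / 2 * Real.log ((1 - ‖yv‖) / 2)
      - ((1 + ‖yv‖) / 2 - (1 - ‖yv‖) / 2) * Real.log ((pm 1 (Uᴴ * bloch xv * U)).re)
      - (1 - ‖yv‖) / 2 * Real.log ((pm 2 (Uᴴ * bloch xv * U)).re)
    = -(-((1 + ‖yv‖) / 2 * Real.log ((1 + ‖yv‖) / 2)
          + (1 - ‖yv‖) / 2 * Real.log ((1 - ‖yv‖) / 2)))
      - ‖yv‖ * Real.log ((1 + ‖xv‖ * Real.cos θ) / 2)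
      - (1 - ‖yv‖) / 2 * Real.log ((1 - ‖xv‖ ^ 2) / 4) :=
  qubit_rate_function_formula_general xv yv θ hθ U hU hσ
end

section
/- Among all density matrices σ with fixed ordered spectrum x ∈ Σ, the quantum relative entropy S(ρ,σ) = tr(σ ln σ − σ ln ρ) with ρ positive definite is minimized when σ commutes with ρ and their eigenvalues are ordered in the same way in a joint eigenbasis; the minimal value is inf_{σ: s(σ)=x} S(ρ,σ) = ∑_{j=1}^d x_j (ln x_j − ln r_j), where r = s(ρ). -/
open Matrix ComplexOrder Finset

/-- The logarithm of a Hermitian matrix, via the spectral decomposition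
(functional calculus applied to `Real.log`). -/
noncomputable def hermLog {d : ℕ} {A : Matrix (Fin d) (Fin d) ℂ} (hA : A.IsHermitian) :
    Matrix (Fin d) (Fin d) ℂ :=
  (hA.eigenvectorUnitary : Matrix (Fin d) (Fin d) ℂ)
    * Matrix.diagonal (fun i => (Real.log (hA.eigenvalues i) : ℂ))
    * star (hA.eigenvectorUnitary : Matrix (Fin d) (Fin d) ℂ)

/-! Write `σ = U diag(x) U†` and `ρ = V diag(r) V†`. Functional calculus does not depend on the
chosen diagonalisation, so `tr σ ln σ = ∑ x ln x` for every `U`, while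
`tr σ ln ρ = x ⬝ B (ln r)` with `B = |U† V|²` (entrywise) doubly stochastic. By Birkhoff's theorem
`B` is a convex combination of permutation matrices, and by the rearrangement inequality each of
them gives at most `x ⬝ ln r`, since `x` and `ln r` are both decreasing. Equality holds for
`U = V`, where `B = 1`. -/

section

variable {n : Type*} [Fintype n] [DecidableEq n]

theorem dotProduct_mulVec_le_dotProduct_of_mem_doublyStochastic {R : Type*} [Field R]
    [LinearOrder R] [IsStrictOrderedRing R] {a b : n → R} (hab : Monovary a b)
    {M : Matrix n n R} (hM : M ∈ doublyStochastic R n) : a ⬝ᵥ M *ᵥ b ≤ a ⬝ᵥ b := by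
  have hlin : IsLinearMap R fun N : Matrix n n R => a ⬝ᵥ N *ᵥ b :=
    ⟨fun N N' => by simp [add_mulVec, dotProduct_add],
      fun c N => by simp [smul_mulVec, dotProduct_smul]⟩
  rw [← SetLike.mem_coe, doublyStochastic_eq_convexHull_permMatrix] at hM
  refine convexHull_min ?_ (convex_halfSpace_le hlin _) hM
  rintro _ ⟨σ, rfl⟩
  simpa [permMatrix_mulVec, dotProduct] using hab.sum_mul_comp_perm_le_sum_mul

theorem map_normSq_mem_doublyStochastic {Q : Matrix n n ℂ} (hQ : Q ∈ unitaryGroup n ℂ) :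
    Q.map Complex.normSq ∈ doublyStochastic ℝ n := by
  have hrow (i : n) : ∑ j, Complex.normSq (Q i j) = 1 := by
    have := congr_fun₂ (mem_unitaryGroup_iff.mp hQ) i i
    simp only [mul_apply, star_apply, RCLike.star_def, Complex.mul_conj, one_apply_eq] at this
    exact_mod_cast this
  have hcol (j : n) : ∑ i, Complex.normSq (Q i j) = 1 := by
    have := congr_fun₂ (mem_unitaryGroup_iff'.mp hQ) j j
    simp only [mul_apply, star_apply, RCLike.star_def, Complex.conj_mul', one_apply_eq] at this
    simp only [Complex.normSq_eq_norm_sq]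
    exact_mod_cast this
  exact mem_doublyStochastic_iff_sum.mpr ⟨fun i j => Complex.normSq_nonneg _, hrow, hcol⟩

theorem diagonal_comp_mul_eq_mul_diagonal_comp {R : Type*} [CommRing R] [IsDomain R]
    {a b : n → R} {Q : Matrix n n R} (h : diagonal a * Q = Q * diagonal b) (f : R → R) :
    diagonal (f ∘ a) * Q = Q * diagonal (f ∘ b) := by
  ext i j
  have hij := congr_fun₂ h i j
  simp only [diagonal_mul, mul_diagonal, Function.comp_apply] at hij ⊢
  by_cases hQ : Q i j = 0
  · simp [hQ]
  · have hab : a i = b j := mul_left_cancel₀ hQ (by rwa [mul_comm] at hij)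
    rw [hab, mul_comm]

theorem conj_diagonal_comp_eq_of_conj_diagonal_eq {R : Type*} [CommRing R] [IsDomain R]
    [StarRing R] {U W : Matrix n n R} (hU : U ∈ unitaryGroup n R) (hW : W ∈ unitaryGroup n R)
    {a b : n → R} (h : U * diagonal a * Uᴴ = W * diagonal b * Wᴴ) (f : R → R) :
    U * diagonal (f ∘ a) * Uᴴ = W * diagonal (f ∘ b) * Wᴴ := by
  have hUU : U * Uᴴ = 1 := mem_unitaryGroup_iff.mp hU
  have hUU' : Uᴴ * U = 1 := mem_unitaryGroup_iff'.mp hU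
  have hWW : W * Wᴴ = 1 := mem_unitaryGroup_iff.mp hW
  have hWW' : Wᴴ * W = 1 := mem_unitaryGroup_iff'.mp hW
  have hab : diagonal a * (Uᴴ * W) = (Uᴴ * W) * diagonal b := by
    calc diagonal a * (Uᴴ * W) = Uᴴ * (U * diagonal a * Uᴴ) * W := by
          simp only [← mul_assoc, hUU', one_mul]
      _ = (Uᴴ * W) * diagonal b := by
          rw [h]; simp only [mul_assoc, hWW', mul_one]
  calc U * diagonal (f ∘ a) * Uᴴ = U * (diagonal (f ∘ a) * (Uᴴ * W)) * Wᴴ := by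
        simp only [mul_assoc, hWW, mul_one]
    _ = W * diagonal (f ∘ b) * Wᴴ := by
        rw [diagonal_comp_mul_eq_mul_diagonal_comp hab f]
        simp only [← mul_assoc, hUU, one_mul]

theorem commute_conj_diagonal {R : Type*} [CommRing R] [StarRing R] {U : Matrix n n R}
    (hU : U ∈ unitaryGroup n R) (a b : n → R) :
    Commute (U * diagonal a * Uᴴ) (U * diagonal b * Uᴴ) :=
  (commute_diagonal a b).map (Unitary.conjStarAlgAut R _ ⟨U, hU⟩)

theorem isHermitian_conj_diagonal_ofReal (U : Matrix n n ℂ) (a : n → ℝ) :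
    (U * diagonal (fun i => (a i : ℂ)) * Uᴴ).IsHermitian :=
  isHermitian_mul_mul_conjTranspose U
    (isHermitian_diagonal_iff.mpr fun i => Complex.conj_ofReal (a i))

theorem re_trace_conj_diagonal_mul_conj_diagonal (U W : Matrix n n ℂ) (a b : n → ℝ) :
    (trace ((U * diagonal (fun i => (a i : ℂ)) * Uᴴ) *
      (W * diagonal (fun j => (b j : ℂ)) * Wᴴ))).re
      = a ⬝ᵥ (Uᴴ * W).map Complex.normSq *ᵥ b := by
  set Q := Uᴴ * W
  have hcyc : trace ((U * diagonal (fun i => (a i : ℂ)) * Uᴴ) *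
      (W * diagonal (fun j => (b j : ℂ)) * Wᴴ))
      = trace (diagonal (fun i => (a i : ℂ)) * Q * diagonal (fun j => (b j : ℂ)) * Qᴴ) := by
    rw [conjTranspose_mul, conjTranspose_conjTranspose, mul_assoc U, mul_assoc U,
      trace_mul_comm U]
    simp only [Q, mul_assoc]
  have hdiag (i : n) :
      (diagonal (fun i => (a i : ℂ)) * Q * diagonal (fun j => (b j : ℂ)) * Qᴴ) i i
        = ∑ j, ((a i * (Complex.normSq (Q i j) * b j) : ℝ) : ℂ) := by
    rw [mul_apply]
    simp only [diagonal_mul, mul_diagonal, conjTranspose_apply, RCLike.star_def]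
    refine Finset.sum_congr rfl fun j _ => ?_
    push_cast
    rw [← Complex.mul_conj]
    ring
  rw [hcyc, trace]
  simp only [diag_apply]
  rw [Finset.sum_congr rfl fun i _ => hdiag i]
  simp only [dotProduct, mulVec, map_apply, Finset.mul_sum, ← Complex.ofReal_sum,
    Complex.ofReal_re]

end

section

variable {d : ℕ}

theorem hermLog_eq_of_eq_conj_diagonal {A U : Matrix (Fin d) (Fin d) ℂ} (hA : A.IsHermitian)
    (hU : U ∈ unitaryGroup (Fin d) ℂ) {a : Fin d → ℝ}
    (h : A = U * diagonal (fun i => (a i : ℂ)) * Uᴴ) :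
    hermLog hA = U * diagonal (fun i => (Real.log (a i) : ℂ)) * Uᴴ := by
  have hspec : U * diagonal (fun i => (a i : ℂ)) * Uᴴ
      = (hA.eigenvectorUnitary : Matrix (Fin d) (Fin d) ℂ)
        * diagonal (RCLike.ofReal ∘ hA.eigenvalues)
        * (hA.eigenvectorUnitary : Matrix (Fin d) (Fin d) ℂ)ᴴ :=
    h ▸ hA.spectral_theorem
  have := conj_diagonal_comp_eq_of_conj_diagonal_eq hU (SetLike.coe_mem _) hspec
    (fun z => (Real.log z.re : ℂ))
  simpa [Function.comp_def, hermLog, star_eq_conjTranspose] using this.symm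

theorem re_trace_sub_mul_hermLog_eq {σ ρ U V : Matrix (Fin d) (Fin d) ℂ}
    (hU : U ∈ unitaryGroup (Fin d) ℂ) (hV : V ∈ unitaryGroup (Fin d) ℂ) {x r : Fin d → ℝ}
    (hσdef : σ = U * diagonal (fun i => (x i : ℂ)) * Uᴴ)
    (hρdef : ρ = V * diagonal (fun i => (r i : ℂ)) * Vᴴ)
    (hσ : σ.IsHermitian) (hρ : ρ.IsHermitian) :
    (trace (σ * hermLog hσ - σ * hermLog hρ)).re
      = x ⬝ᵥ (Real.log ∘ x) - x ⬝ᵥ (Uᴴ * V).map Complex.normSq *ᵥ (Real.log ∘ r) := by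
  have hUU : Uᴴ * U = 1 := mem_unitaryGroup_iff'.mp hU
  rw [trace_sub, Complex.sub_re, hermLog_eq_of_eq_conj_diagonal hσ hU hσdef,
    hermLog_eq_of_eq_conj_diagonal hρ hV hρdef, hσdef, re_trace_conj_diagonal_mul_conj_diagonal,
    re_trace_conj_diagonal_mul_conj_diagonal, hUU]
  simp [Function.comp_def]

end

theorem relative_entropy_min_over_fixed_spectrum_general
    {d : ℕ} (ρ : Matrix (Fin d) (Fin d) ℂ)
    (r x : ℕ → ℝ)
    (hrmono : ∀ i j, i ≤ j → j < d → r j ≤ r i) (hrpos : ∀ j, j < d → 0 < r j)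
    (hxmono : ∀ i j, i ≤ j → j < d → x j ≤ x i)
    (V : Matrix (Fin d) (Fin d) ℂ) (hV : V ∈ Matrix.unitaryGroup (Fin d) ℂ)
    (hρdef : ρ = V * Matrix.diagonal (fun i : Fin d => (r i.1 : ℂ)) * Vᴴ)
    (hρ : ρ.IsHermitian) :
    (∀ U ∈ Matrix.unitaryGroup (Fin d) ℂ,
      ∀ σ : Matrix (Fin d) (Fin d) ℂ,
        σ = U * Matrix.diagonal (fun i : Fin d => (x i.1 : ℂ)) * Uᴴ →
        ∀ hσ : σ.IsHermitian,
          ∑ j ∈ range d, x j * (Real.log (x j) - Real.log (r j))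
            ≤ (Matrix.trace (σ * hermLog hσ - σ * hermLog hρ)).re) ∧
    (∃ U ∈ Matrix.unitaryGroup (Fin d) ℂ,
      ∃ (σ : Matrix (Fin d) (Fin d) ℂ) (hσ : σ.IsHermitian),
        σ = U * Matrix.diagonal (fun i : Fin d => (x i.1 : ℂ)) * Uᴴ ∧
        σ * ρ = ρ * σ ∧
        (Matrix.trace (σ * hermLog hσ - σ * hermLog hρ)).re
          = ∑ j ∈ range d, x j * (Real.log (x j) - Real.log (r j))) := by
  set x' : Fin d → ℝ := fun i => x i
  set r' : Fin d → ℝ := fun i => r i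
  have hsum : ∑ j ∈ range d, x j * (Real.log (x j) - Real.log (r j))
      = x' ⬝ᵥ (Real.log ∘ x') - x' ⬝ᵥ (Real.log ∘ r') := by
    rw [← Fin.sum_univ_eq_sum_range]
    simp [x', r', dotProduct, mul_sub]
  have hmono : Monovary x' (Real.log ∘ r') :=
    Antitone.monovary (fun i j hij => hxmono i j hij j.2)
      (fun i j hij => Real.log_le_log (hrpos j j.2) (hrmono i j hij j.2))
  refine ⟨fun U hU σ hσdef hσ => ?_,
    ⟨V, hV, _, isHermitian_conj_diagonal_ofReal V x', rfl, ?_, ?_⟩⟩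
  · rw [re_trace_sub_mul_hermLog_eq hU hV hσdef hρdef, hsum]
    exact sub_le_sub_left (dotProduct_mulVec_le_dotProduct_of_mem_doublyStochastic hmono
      (map_normSq_mem_doublyStochastic (mul_mem (Unitary.star_mem hU) hV))) _
  · rw [hρdef]
    exact commute_conj_diagonal hV _ _
  · have hVV : Vᴴ * V = 1 := mem_unitaryGroup_iff'.mp hV
    rw [re_trace_sub_mul_hermLog_eq hV hV rfl hρdef, hsum, hVV]
    simp [r']

/-- among all density matrices `σ` with fixed decreasingly ordered spectrum `x`,
the quantum relative entropy `S(ρ,σ) = tr(σ ln σ − σ ln ρ)` (`ρ` positive definite with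
ordered spectrum `r`) is bounded below by `∑_j x_j (ln x_j − ln r_j)`, and this bound is
attained by a `σ` commuting with `ρ` whose eigenvalues are ordered in the same joint
eigenbasis; hence `inf_{σ : s(σ)=x} S(ρ,σ) = ∑_j x_j (ln x_j − ln r_j)`. -/
theorem relative_entropy_min_over_fixed_spectrum
    {d : ℕ} (ρ : Matrix (Fin d) (Fin d) ℂ)
    (r x : ℕ → ℝ)
    (hrmono : ∀ i j, i ≤ j → j < d → r j ≤ r i) (hrpos : ∀ j, j < d → 0 < r j)
    (hrsum : ∑ j ∈ range d, r j = 1)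
    (hxmono : ∀ i j, i ≤ j → j < d → x j ≤ x i) (hxnn : ∀ j, j < d → 0 ≤ x j)
    (hxsum : ∑ j ∈ range d, x j = 1)
    (V : Matrix (Fin d) (Fin d) ℂ) (hV : V ∈ Matrix.unitaryGroup (Fin d) ℂ)
    (hρdef : ρ = V * Matrix.diagonal (fun i : Fin d => (r i.1 : ℂ)) * Vᴴ)
    (hρ : ρ.IsHermitian) :
    (∀ U ∈ Matrix.unitaryGroup (Fin d) ℂ,
      ∀ σ : Matrix (Fin d) (Fin d) ℂ,
        σ = U * Matrix.diagonal (fun i : Fin d => (x i.1 : ℂ)) * Uᴴ →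
        ∀ hσ : σ.IsHermitian,
          ∑ j ∈ range d, x j * (Real.log (x j) - Real.log (r j))
            ≤ (Matrix.trace (σ * hermLog hσ - σ * hermLog hρ)).re) ∧
    (∃ U ∈ Matrix.unitaryGroup (Fin d) ℂ,
      ∃ (σ : Matrix (Fin d) (Fin d) ℂ) (hσ : σ.IsHermitian),
        σ = U * Matrix.diagonal (fun i : Fin d => (x i.1 : ℂ)) * Uᴴ ∧
        σ * ρ = ρ * σ ∧
        (Matrix.trace (σ * hermLog hσ - σ * hermLog hρ)).re
          = ∑ j ∈ range d, x j * (Real.log (x j) - Real.log (r j))) :=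
  relative_entropy_min_over_fixed_spectrum_general ρ r x hrmono hrpos hxmono V hV hρdef hρ
end

section
/- Let f ∈ L²(S¹) belong to the Hardy space H²(S¹) (i.e. all negative Fourier coefficients of f vanish). If f vanishes almost everywhere on a nonempty open arc of S¹, then f = 0 in L²(S¹). -/
open MeasureTheory AddCircle

instance : Fact (0 < 2 * Real.pi) := ⟨by positivity⟩

open Set Complex intervalIntegral

local notation "π" => Real.pi

lemma arc_coe_mem_iff {θ₁ θ₂ a : ℝ} (h2 : θ₂ ≤ θ₁ + 2*π) (ha : a ∈ Set.Ioc θ₁ (θ₁ + 2*π)) :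
    (↑a : AddCircle (2*π)) ∈ ((↑) '' Set.Ioc θ₁ θ₂ : Set (AddCircle (2*π))) ↔ a ∈ Set.Ioc θ₁ θ₂ := by
  have hπ : 0 < π := Real.pi_pos
  constructor
  · rintro ⟨t, ht, hta⟩
    obtain ⟨m, hm⟩ := AddSubgroup.mem_zmultiples_iff.mp (QuotientAddGroup.eq.mp hta.symm)
    rw [zsmul_eq_mul] at hm
    have hm1 : (m:ℝ) < 1 := by nlinarith [ha.1, ha.2, ht.1, ht.2]
    have hm2 : (-1:ℝ) < m := by nlinarith [ha.1, ha.2, ht.1, ht.2]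
    have : m = 0 := by
      have h1 : m < 1 := by exact_mod_cast hm1
      have h2' : -1 < m := by exact_mod_cast hm2
      omega
    rw [this] at hm
    simp at hm
    have : a = t := by linarith
    rwa [this]
  · intro h; exact ⟨a, h, rfl⟩

lemma arc_integral {θ₁ θ₂ : ℝ} (h1 : θ₁ ≤ θ₂) (h2 : θ₂ ≤ θ₁ + 2*π) (h : AddCircle (2*π) → ℂ) :
    ∫ x, (((↑) '' Set.Ioc θ₁ θ₂ : Set (AddCircle (2*π))).indicator h) x ∂haarAddCircle
      = (2*π)⁻¹ • ∫ t in θ₁..θ₂, h ↑t := by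
  have hπ : (0:ℝ) < 2*π := by positivity
  set g : AddCircle (2*π) → ℂ := ((↑) '' Set.Ioc θ₁ θ₂ : Set (AddCircle (2*π))).indicator h with hg
  have hvol : ∫ x, g x ∂(volume : Measure (AddCircle (2*π))) = (2*π) • ∫ x, g x ∂haarAddCircle := by
    rw [AddCircle.volume_eq_smul_haarAddCircle, MeasureTheory.integral_smul_measure, ENNReal.toReal_ofReal hπ.le]
  have hpre := AddCircle.integral_preimage (2*π) θ₁ g
  have heq : ∫ a in Set.Ioc θ₁ (θ₁ + 2*π), g ↑a = ∫ t in θ₁..θ₂, h ↑t := by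
    rw [show (∫ a in Set.Ioc θ₁ (θ₁ + 2*π), g ↑a)
        = ∫ a in Set.Ioc θ₁ (θ₁ + 2*π), (Set.Ioc θ₁ θ₂).indicator (fun t : ℝ => h ↑t) a from ?_,
      MeasureTheory.setIntegral_indicator measurableSet_Ioc,
      Set.inter_eq_self_of_subset_right (Set.Ioc_subset_Ioc_right h2),
      intervalIntegral.integral_of_le h1]
    apply MeasureTheory.setIntegral_congr_fun measurableSet_Ioc
    intro a ha
    simp only [hg]
    by_cases hmem : a ∈ Set.Ioc θ₁ θ₂
    · rw [Set.indicator_of_mem hmem,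
        Set.indicator_of_mem ((arc_coe_mem_iff h2 ha).mpr hmem)]
    · rw [Set.indicator_of_notMem hmem,
        Set.indicator_of_notMem (fun hc => hmem ((arc_coe_mem_iff h2 ha).mp hc))]
  rw [← heq, hpre, hvol]
  rw [smul_smul]
  rw [inv_mul_cancel₀ (ne_of_gt hπ), one_smul]

lemma arc_measurable {θ₁ θ₂ : ℝ} (h2 : θ₂ ≤ θ₁ + 2*π) :
    MeasurableSet ((↑) '' Set.Ioc θ₁ θ₂ : Set (AddCircle (2*π))) := by
  have hπ : (0:ℝ) < 2*π := by positivity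
  have key : ((↑) '' Set.Ioc θ₁ θ₂ : Set (AddCircle (2*π)))
      = (AddCircle.measurableEquivIoc (2*π) θ₁) ⁻¹' (Subtype.val ⁻¹' Set.Ioc θ₁ θ₂) := by
    ext x
    have hx : ((AddCircle.measurableEquivIoc (2*π) θ₁ x : ℝ) : AddCircle (2*π)) = x :=
      (AddCircle.equivIoc (2*π) θ₁).symm_apply_apply x
    have hmem : ((AddCircle.measurableEquivIoc (2*π) θ₁ x : ℝ)) ∈ Set.Ioc θ₁ (θ₁ + 2*π) :=
      (AddCircle.equivIoc (2*π) θ₁ x).2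
    constructor
    · intro hxA
      have := (arc_coe_mem_iff h2 hmem).mp (by rwa [hx])
      exact this
    · intro hxB
      rw [← hx]
      exact (arc_coe_mem_iff h2 hmem).mpr hxB
  rw [key]
  exact (AddCircle.measurableEquivIoc (2*π) θ₁).measurable (measurable_subtype_coe measurableSet_Ioc)

lemma covering_lemma {α δ : ℝ} (hδ : 0 < δ) {N : ℕ} (hN : 2*π ≤ N * δ) (θ : ℝ) :
    ∃ j : ℕ, j < N ∧ ∃ m : ℤ, α ≤ θ + j*δ + 2*π*m ∧ θ + j*δ + 2*π*m ≤ α + δ := by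
  have hπ : (0:ℝ) < 2*π := by positivity
  set β := α + δ with hβ
  set m : ℤ := -⌈(θ - β)/(2*π)⌉ with hm
  set γ := θ + 2*π*m with hγ
  have hc1 : θ - β ≤ (⌈(θ - β)/(2*π)⌉ : ℝ) * (2*π) :=
    (div_le_iff₀ hπ).mp (Int.le_ceil ((θ - β)/(2*π)))
  have hc2 : ((⌈(θ - β)/(2*π)⌉ : ℝ)) * (2*π) < θ - β + 2*π := by
    have h := Int.ceil_lt_add_one ((θ - β)/(2*π))
    have := (lt_div_iff₀ hπ).mp (by linarith : ((⌈(θ - β)/(2*π)⌉ : ℝ) - 1) < (θ - β)/(2*π))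
    linarith
  have hγ1 : γ ≤ β := by
    rw [hγ, hm]; push_cast; linarith
  have hγ2 : β - 2*π < γ := by
    rw [hγ, hm]; push_cast; linarith
  have hN1 : 1 ≤ N := by
    by_contra hc
    push_neg at hc
    interval_cases N
    simp at hN
    nlinarith
  by_cases hge : α ≤ γ
  · exact ⟨0, hN1, m, by push_cast; constructor <;> [skip; skip] <;> simp [hγ] at * <;> nlinarith⟩
  · push_neg at hge
    set j : ℕ := (⌈(α - γ)/δ⌉).toNat with hj
    have hjc : (j:ℝ) = ⌈(α - γ)/δ⌉ := by
      rw [hj]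
      norm_cast
      exact Int.toNat_of_nonneg (Int.ceil_nonneg (div_nonneg (by linarith) hδ.le))
    have h1 : (α - γ)/δ ≤ (j:ℝ) := by rw [hjc]; exact Int.le_ceil _
    have h2 : (j:ℝ) < (α - γ)/δ + 1 := by rw [hjc]; exact Int.ceil_lt_add_one _
    refine ⟨j, ?_, m, ?_, ?_⟩
    · have hb : (α - γ)/δ < (N:ℝ) - 1 := by
        rw [div_lt_iff₀ hδ]
        nlinarith
      have : (j:ℝ) < N := by nlinarith
      exact_mod_cast this
    · have : α - γ ≤ j*δ := by
        rw [div_le_iff₀ hδ] at h1; linarith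
      rw [hγ] at this; linarith
    · have h3 : ((j:ℝ) - 1) * δ < α - γ :=
        (lt_div_iff₀ hδ).mp (by linarith : ((j:ℝ) - 1) < (α - γ)/δ)
      rw [hγ] at h3
      rw [hβ]
      nlinarith [h3]

lemma analytic_prod_factor_zero {U : Set ℂ} (hU : IsOpen U) (hUc : IsPreconnected U)
    (hne : U.Nonempty) (s : Finset ℕ) (F : ℕ → ℂ → ℂ)
    (hF : ∀ j ∈ s, AnalyticOnNhd ℂ (F j) U)
    (h0 : ∀ z ∈ U, ∏ j ∈ s, F j z = 0) :
    ∃ j ∈ s, ∀ z ∈ U, F j z = 0 := by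
  induction s using Finset.induction with
  | empty =>
    obtain ⟨z, hz⟩ := hne
    simpa using h0 z hz
  | @insert a s ha ih =>
    by_cases hFa : ∀ z ∈ U, F a z = 0
    · exact ⟨a, Finset.mem_insert_self a s, hFa⟩
    · push_neg at hFa
      obtain ⟨z₀, hz₀U, hz₀⟩ := hFa
      have hprod_an : AnalyticOnNhd ℂ (fun z => ∏ j ∈ s, F j z) U := by
        intro z hz
        exact Finset.analyticAt_fun_prod s (fun j hj => hF j (Finset.mem_insert_of_mem hj) z hz)
      have hev : (fun z => ∏ j ∈ s, F j z) =ᶠ[nhds z₀] 0 := by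
        have hne0 : ∀ᶠ z in nhds z₀, F a z ≠ 0 :=
          ((hF a (Finset.mem_insert_self a s) z₀ hz₀U).continuousAt).eventually_ne hz₀
        filter_upwards [hne0, hU.mem_nhds hz₀U] with z hz1 hz2
        have := h0 z hz2
        rw [Finset.prod_insert ha] at this
        have := mul_eq_zero.mp this
        tauto
      have heq : Set.EqOn (fun z => ∏ j ∈ s, F j z) 0 U :=
        hprod_an.eqOn_zero_of_preconnected_of_eventuallyEq_zero hUc hz₀U hev
      obtain ⟨j, hjs, hj⟩ := ih (fun j hj => hF j (Finset.mem_insert_of_mem hj))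
        (fun z hz => heq hz)
      exact ⟨j, Finset.mem_insert_of_mem hjs, hj⟩


noncomputable def hsC (f : AddCircle (2*π) → ℂ) : ℕ → ℂ
  | 0 => 0
  | (n+1) => fourierCoeff f (n : ℤ) / ((n : ℂ)+1)

noncomputable def hsG (f : AddCircle (2*π) → ℂ) (z : ℂ) : ℂ := ∑' n, hsC f n * z^n

lemma hsG_hasSum (f : AddCircle (2*π) → ℂ) (hsummc : Summable fun n => ‖hsC f n‖)
    {z : ℂ} (hz : ‖z‖ ≤ 1) : HasSum (fun n => hsC f n * z^n) (hsG f z) := by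
  refine (Summable.hasSum ?_)
  apply Summable.of_norm_bounded hsummc
  intro n
  rw [norm_mul]
  calc ‖hsC f n‖ * ‖z^n‖ ≤ ‖hsC f n‖ * 1 := by
        apply mul_le_mul_of_nonneg_left _ (norm_nonneg _)
        rw [norm_pow]
        exact pow_le_one₀ (norm_nonneg z) hz
    _ = ‖hsC f n‖ := mul_one _

lemma hs_step (f : AddCircle (2*π) → ℂ) (hf : MemLp f 2 haarAddCircle)
    (hhardy : ∀ k : ℤ, k < 0 → fourierCoeff f k = 0)
    {S : Set (AddCircle (2*π))} (hvanish : ∀ᵐ x ∂haarAddCircle, x ∈ S → f x = 0)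
    (hsummc : Summable fun n => ‖hsC f n‖)
    {θ₁ θ₂ : ℝ} (h1 : θ₁ ≤ θ₂) (h2 : θ₂ ≤ θ₁ + 2*π)
    (hsub : ((↑) '' Set.Ioc θ₁ θ₂ : Set (AddCircle (2*π))) ⊆ S) :
    hsG f (Complex.exp (θ₂*Complex.I)) = hsG f (Complex.exp (θ₁*Complex.I)) := by
  have hπ : (0:ℝ) < 2*π := by positivity
  have hπC : ((2*π : ℝ) : ℂ) ≠ 0 := by
    simp only [ne_eq, Complex.ofReal_eq_zero]; positivity
  set A : Set (AddCircle (2*π)) := (↑) '' Set.Ioc θ₁ θ₂ with hA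
  have hAmeas : MeasurableSet A := arc_measurable h2
  set W : AddCircle (2*π) → ℂ := A.indicator (fun x => fourier (-1) x) with hWdef
  have hWmeas : AEStronglyMeasurable W haarAddCircle :=
    ((map_continuous (fourier (-1))).aestronglyMeasurable).indicator hAmeas
  have hW2 : MemLp W 2 haarAddCircle := by
    refine MemLp.of_bound hWmeas 1 (Filter.Eventually.of_forall fun x => ?_)
    rw [hWdef]
    by_cases hx : x ∈ A
    · rw [Set.indicator_of_mem hx]
      simp [Circle.norm_coe]
    · rw [Set.indicator_of_notMem hx]; simp
  set w := hW2.toLp W with hw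
  set fLp := hf.toLp f with hfLp
  -- the inner products
  have hwf : (inner ℂ w fLp : ℂ) = 0 := by
    rw [MeasureTheory.L2.inner_def]
    rw [← integral_zero (AddCircle (2*π)) ℂ (μ := haarAddCircle)]
    apply MeasureTheory.integral_congr_ae
    filter_upwards [hW2.coeFn_toLp, hf.coeFn_toLp, hvanish] with x hx1 hx2 hx3
    rw [RCLike.inner_apply', hx1, hx2]
    by_cases hx : x ∈ A
    · rw [hx3 (hsub hx), mul_zero]
    · rw [hWdef, Set.indicator_of_notMem hx, map_zero, zero_mul]
  have hwk : ∀ n : ℕ, (inner ℂ w (fourierLp 2 (n:ℤ)) : ℂ)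
      = ((2*π : ℝ))⁻¹ • ((Complex.exp (((n:ℂ)+1)*Complex.I*θ₂)
          - Complex.exp (((n:ℂ)+1)*Complex.I*θ₁))/(((n:ℂ)+1)*Complex.I)) := by
    intro n
    have hstep1 : (inner ℂ w (fourierLp 2 (n:ℤ)) : ℂ)
        = ∫ x, A.indicator (fun y => fourier (1+n) y) x ∂haarAddCircle := by
      rw [MeasureTheory.L2.inner_def]
      apply MeasureTheory.integral_congr_ae
      filter_upwards [hW2.coeFn_toLp, coeFn_fourierLp 2 (n:ℤ)] with x hx1 hx2
      rw [RCLike.inner_apply', hx1, hx2]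
      by_cases hx : x ∈ A
      · rw [hWdef, Set.indicator_of_mem hx, Set.indicator_of_mem hx, fourier_add]
        congr 1
        rw [show ((-1:ℤ)) = -(1:ℤ) from rfl, fourier_neg, Complex.conj_conj]
      · rw [hWdef, Set.indicator_of_notMem hx, Set.indicator_of_notMem hx, map_zero, zero_mul]
    rw [hstep1, arc_integral h1 h2]
    congr 1
    have hptw : ∀ t : ℝ, (fourier (1+(n:ℤ)) (↑t : AddCircle (2*π)) : ℂ)
        = Complex.exp ((((n:ℂ)+1)*Complex.I) * t) := by
      intro t
      rw [fourier_coe_apply]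
      congr 1
      have hpne : ((π:ℝ):ℂ) ≠ 0 := by
        simp only [ne_eq, Complex.ofReal_eq_zero]
        exact Real.pi_ne_zero
      push_cast
      field_simp
      ring
    rw [integral_congr (fun t _ => hptw t)]
    rw [integral_exp_mul_complex (by
      apply mul_ne_zero _ Complex.I_ne_zero
      norm_cast)]
  -- Fourier series of f in L²
  have hfc : ∀ k : ℤ, fourierCoeff (⇑fLp) k = fourierCoeff f k := by
    intro k
    apply MeasureTheory.integral_congr_ae
    filter_upwards [hf.coeFn_toLp] with x hx
    rw [hx]
  have hHS : HasSum (fun k : ℤ => fourierCoeff f k • fourierLp 2 k) fLp := by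
    have := hasSum_fourier_series_L2 fLp
    simpa only [hfc] using this
  have happl : HasSum (fun k : ℤ => (inner ℂ w (fourierCoeff f k • fourierLp 2 k) : ℂ))
      (inner ℂ w fLp : ℂ) := by
    have := hHS.mapL (innerSL ℂ w)
    simpa only [innerSL_apply_apply] using this
  have hg : HasSum (fun k : ℤ => fourierCoeff f k * (inner ℂ w (fourierLp 2 k) : ℂ)) 0 := by
    rw [← hwf]
    simpa only [inner_smul_right] using happl
  have hrange : ∀ k : ℤ, k ∉ Set.range ((↑) : ℕ → ℤ) →
      fourierCoeff f k * (inner ℂ w (fourierLp 2 k) : ℂ) = 0 := by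
    intro k hk
    have hneg : k < 0 := by
      by_contra hc
      push_neg at hc
      exact hk ⟨k.toNat, Int.toNat_of_nonneg hc⟩
    rw [hhardy k hneg, zero_mul]
  have hg' : HasSum (fun n : ℕ => fourierCoeff f (n:ℤ) * (inner ℂ w (fourierLp 2 (n:ℤ)) : ℂ)) 0 :=
    (Function.Injective.hasSum_iff (Nat.cast_injective : Function.Injective (Nat.cast : ℕ → ℤ)) hrange).mpr hg
  have key : ∀ n : ℕ, (((2*π:ℝ):ℂ) * Complex.I)
        * (fourierCoeff f (n:ℤ) * (inner ℂ w (fourierLp 2 (n:ℤ)) : ℂ))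
      = hsC f (n+1) * ((Complex.exp ((θ₂:ℂ)*Complex.I))^(n+1)
          - (Complex.exp ((θ₁:ℂ)*Complex.I))^(n+1)) := by
    intro n
    have hpow : ∀ θ:ℝ, Complex.exp (((n:ℂ)+1)*Complex.I*θ)
        = (Complex.exp ((θ:ℂ)*Complex.I))^(n+1) := by
      intro θ
      rw [← Complex.exp_nat_mul]
      congr 1
      push_cast
      ring
    rw [hwk n, hpow θ₂, hpow θ₁, Complex.real_smul, Complex.ofReal_inv]
    simp only [hsC]
    have hn1 : ((n:ℂ)+1) ≠ 0 := by norm_cast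
    generalize fourierCoeff f (n:ℤ) = a
    generalize (Complex.exp ((θ₂:ℂ)*Complex.I))^(n+1) = E2
    generalize (Complex.exp ((θ₁:ℂ)*Complex.I))^(n+1) = E1
    rw [div_eq_mul_inv, div_eq_mul_inv, mul_inv, Complex.ofReal_mul]
    calc (2*(π:ℂ) * Complex.I) * (a * ((2*(π:ℂ))⁻¹ * ((E2 - E1) * (((n:ℂ)+1)⁻¹ * Complex.I⁻¹))))
        = (a * ((n:ℂ)+1)⁻¹ * (E2 - E1)) * ((2*(π:ℂ)) * (2*(π:ℂ))⁻¹) * (Complex.I * Complex.I⁻¹) := by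
          ring
      _ = a * ((n:ℂ)+1)⁻¹ * (E2 - E1) := by
          rw [mul_inv_cancel₀ (by simpa using hπC : (2*(π:ℂ)) ≠ 0),
            mul_inv_cancel₀ Complex.I_ne_zero, mul_one, mul_one]
  have hg'' : HasSum (fun n : ℕ => hsC f (n+1) * ((Complex.exp ((θ₂:ℂ)*Complex.I))^(n+1)
      - (Complex.exp ((θ₁:ℂ)*Complex.I))^(n+1))) 0 := by
    have h := hg'.mul_left (((2*π:ℝ):ℂ) * Complex.I)
    rw [mul_zero] at h
    simpa only [key] using h
  set z₂ := Complex.exp ((θ₂:ℂ)*Complex.I) with hz₂def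
  set z₁ := Complex.exp ((θ₁:ℂ)*Complex.I) with hz₁def
  have hz2n : ‖z₂‖ ≤ 1 := by
    rw [hz₂def, Complex.norm_exp_ofReal_mul_I]
  have hz1n : ‖z₁‖ ≤ 1 := by
    rw [hz₁def, Complex.norm_exp_ofReal_mul_I]
  have hG2 := hsG_hasSum f hsummc hz2n
  have hG1 := hsG_hasSum f hsummc hz1n
  have hdiff : HasSum (fun n : ℕ => hsC f n * (z₂^n - z₁^n)) (hsG f z₂ - hsG f z₁) := by
    simpa only [mul_sub] using hG2.sub hG1
  have hfull : HasSum (fun n : ℕ => hsC f n * (z₂^n - z₁^n)) 0 := by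
    have := (hasSum_nat_add_iff (f := fun n : ℕ => hsC f n * (z₂^n - z₁^n)) 1).mp hg''
    simpa [hsC] using this
  have := hdiff.unique hfull
  exact sub_eq_zero.mp this

lemma prod_diffOn {s : Finset ℕ} {F : ℕ → ℂ → ℂ} {U : Set ℂ}
    (h : ∀ j ∈ s, DifferentiableOn ℂ (F j) U) :
    DifferentiableOn ℂ (fun z => ∏ j ∈ s, F j z) U := by
  induction s using Finset.induction with
  | empty => simpa using differentiableOn_const 1
  | @insert a s ha ih =>
    simp only [Finset.prod_insert ha]
    exact (h a (Finset.mem_insert_self a s)).mul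
      (ih (fun j hj => h j (Finset.mem_insert_of_mem hj)))

lemma prod_contOn {s : Finset ℕ} {F : ℕ → ℂ → ℂ} {U : Set ℂ}
    (h : ∀ j ∈ s, ContinuousOn (F j) U) :
    ContinuousOn (fun z => ∏ j ∈ s, F j z) U := by
  induction s using Finset.induction with
  | empty => simpa using continuousOn_const
  | @insert a s ha ih =>
    simp only [Finset.prod_insert ha]
    exact (h a (Finset.mem_insert_self a s)).mul
      (ih (fun j hj => h j (Finset.mem_insert_of_mem hj)))

set_option maxHeartbeats 1000000 in
lemma hsC_summable (f : AddCircle (2*π) → ℂ) (hf : MemLp f 2 haarAddCircle) :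
    Summable fun n => ‖hsC f n‖ := by
  have hsq : Summable (fun k : ℤ => ‖fourierCoeff f k‖^2) := by
    set fLp := hf.toLp f with hfLp
    have hfc : ∀ k : ℤ, fourierCoeff (⇑fLp) k = fourierCoeff f k := by
      intro k
      apply MeasureTheory.integral_congr_ae
      filter_upwards [hf.coeFn_toLp] with x hx
      rw [hx]
    have hmem := lp.memℓp (fourierBasis.repr fLp)
    rw [memℓp_gen_iff (by norm_num : 0 < (2:ENNReal).toReal)] at hmem
    have : Summable (fun k : ℤ => ‖fourierBasis.repr fLp k‖^(2:ℝ)) := by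
      simpa using hmem
    apply Summable.congr this
    intro k
    rw [fourierBasis_repr, hfc]
    rw [← Real.rpow_natCast ‖fourierCoeff f k‖ 2]
    norm_num
  have hsqn : Summable (fun n : ℕ => ‖fourierCoeff f (n:ℤ)‖^2) :=
    hsq.comp_injective (Nat.cast_injective : Function.Injective (Nat.cast : ℕ → ℤ))
  have hinv : Summable (fun n : ℕ => (1/((n:ℝ)+1))^2) := by
    have h0 : Summable (fun n : ℕ => 1/((n:ℝ))^2) :=
      Real.summable_one_div_nat_pow.mpr (by norm_num)
    have := (summable_nat_add_iff 1).mpr h0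
    apply this.congr
    intro n
    push_cast
    rw [div_pow]
    norm_num
  rw [← summable_nat_add_iff 1]
  refine Summable.of_nonneg_of_le (fun n => norm_nonneg _) ?_ ((hsqn.add hinv).div_const 2)
  · intro m
    show ‖fourierCoeff f (m:ℤ) / ((m:ℂ)+1)‖ ≤ _
    rw [norm_div]
    have h1 : ‖((m:ℂ)+1)‖ = (m:ℝ)+1 := by
      rw [show ((m:ℂ)+1) = ((m+1:ℕ):ℂ) by push_cast; ring, Complex.norm_natCast]
      push_cast; ring
    rw [h1, div_eq_mul_one_div]
    have hm1 : (0:ℝ) ≤ 1/((m:ℝ)+1) := by positivity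
    nlinarith [sq_nonneg (‖fourierCoeff f (m:ℤ)‖ - 1/((m:ℝ)+1)), norm_nonneg (fourierCoeff f (m:ℤ))]

lemma hsG_hasFPowerSeries (f : AddCircle (2*π) → ℂ) (hsummc : Summable fun n => ‖hsC f n‖) :
    HasFPowerSeriesOnBall (hsG f) (FormalMultilinearSeries.ofScalars ℂ (hsC f)) 0 1 := by
  constructor
  · apply FormalMultilinearSeries.le_radius_of_summable_norm (r := 1)
    simp only [FormalMultilinearSeries.ofScalars_norm, NNReal.coe_one, one_pow, mul_one]
    exact hsummc
  · exact one_pos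
  · intro y hy
    have hy' : ‖y‖ < 1 := by
      simpa [edist_zero_right, ← ofReal_norm, ENNReal.ofReal_lt_one] using hy
    simp only [FormalMultilinearSeries.ofScalars_apply_eq, smul_eq_mul, zero_add]
    exact hsG_hasSum f hsummc hy'.le

lemma hsG_contOn (f : AddCircle (2*π) → ℂ) (hsummc : Summable fun n => ‖hsC f n‖) :
    ContinuousOn (hsG f) (Metric.closedBall 0 1) := by
  apply continuousOn_tsum (u := fun n => ‖hsC f n‖)
    (fun i => (continuousOn_const.mul (continuousOn_pow i))) hsummc
  intro n x hx
  simp only [Pi.mul_apply]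
  rw [norm_mul]
  calc ‖hsC f n‖ * ‖x^n‖ ≤ ‖hsC f n‖ * 1 := by
        apply mul_le_mul_of_nonneg_left _ (norm_nonneg _)
        rw [norm_pow]
        exact pow_le_one₀ (norm_nonneg x) (by simpa using Metric.mem_closedBall.mp hx)
    _ = _ := mul_one _

lemma hsG_analyticOn (f : AddCircle (2*π) → ℂ) (hsummc : Summable fun n => ‖hsC f n‖) :
    AnalyticOnNhd ℂ (hsG f) (Metric.ball 0 1) := by
  apply DifferentiableOn.analyticOnNhd _ Metric.isOpen_ball
  have h := (hsG_hasFPowerSeries f hsummc).differentiableOn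
  have : Metric.eball (0:ℂ) 1 = Metric.ball (0:ℂ) 1 := by
    rw [show (1 : ENNReal) = ((1:NNReal) : ENNReal) from rfl, Metric.emetric_ball_nnreal]
    norm_num
  rwa [this] at h

/-- an `L²` function on the circle lying in the Hardy space `H²` (all negative
Fourier coefficients vanish) which vanishes a.e. on a nonempty open arc vanishes identically
(a.e.). -/
theorem hardy_space_vanishing_on_arc
    (f : AddCircle (2 * Real.pi) → ℂ)
    (hf : MeasureTheory.MemLp f 2 haarAddCircle)
    (hhardy : ∀ k : ℤ, k < 0 → fourierCoeff f k = 0)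
    (S : Set (AddCircle (2 * Real.pi))) (hSopen : IsOpen S) (hSne : S.Nonempty)
    (hvanish : ∀ᵐ x ∂haarAddCircle, x ∈ S → f x = 0) :
    f =ᵐ[haarAddCircle] 0 := by
  have hπ : (0:ℝ) < π := Real.pi_pos
  have hsummc := hsC_summable f hf
  obtain ⟨x₀, hx₀⟩ := hSne
  obtain ⟨y₀, rfl⟩ := QuotientAddGroup.mk_surjective x₀
  have hpre : IsOpen ((QuotientAddGroup.mk : ℝ → AddCircle (2*π)) ⁻¹' S) :=
    hSopen.preimage (AddCircle.continuous_mk' (2*π))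
  obtain ⟨ε, hε, hball⟩ := Metric.isOpen_iff.mp hpre y₀ hx₀
  set ε' := min ε π with hε'def
  have hε'0 : 0 < ε' := lt_min hε hπ
  have hε'ε : ε' ≤ ε := min_le_left _ _
  have hε'π : ε' ≤ π := min_le_right _ _
  set α := y₀ - ε'/2 with hαdef
  set β := y₀ + ε'/2 with hβdef
  have harc : ∀ θ ∈ Set.Icc α β,
      hsG f (Complex.exp ((θ:ℂ)*Complex.I)) = hsG f (Complex.exp ((α:ℂ)*Complex.I)) := by
    intro θ hθ
    rcases eq_or_lt_of_le hθ.1 with h|h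
    · rw [← h]
    · apply hs_step f hf hhardy hvanish hsummc hθ.1 (by
        have := hθ.2
        rw [hβdef] at this
        rw [hαdef]
        linarith)
      intro x hx
      obtain ⟨t, ht, rfl⟩ := hx
      apply hball
      rw [Metric.mem_ball, Real.dist_eq]
      have h1 := ht.1
      have h2 := le_trans ht.2 hθ.2
      rw [hαdef] at h1
      rw [hβdef] at h2
      rw [abs_lt]
      constructor <;> nlinarith
  set c0 := hsG f (Complex.exp ((α:ℂ)*Complex.I)) with hc0def
  obtain ⟨N, hN⟩ := exists_nat_ge (2*π/ε')
  have hNδ : 2*π ≤ (N:ℝ) * ε' := by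
    rw [div_le_iff₀ hε'0] at hN
    linarith
  set F : ℕ → ℂ → ℂ := fun j z => hsG f (Complex.exp ((((j:ℝ)*ε' : ℝ):ℂ)*Complex.I) * z) - c0
    with hFdef
  have hωnorm : ∀ j : ℕ, ‖Complex.exp ((((j:ℝ)*ε' : ℝ):ℂ)*Complex.I)‖ = 1 := fun j => by
    rw [Complex.norm_exp_ofReal_mul_I]
  have hmaps : ∀ j : ℕ, Set.MapsTo (fun z => Complex.exp ((((j:ℝ)*ε' : ℝ):ℂ)*Complex.I) * z)
      (Metric.ball (0:ℂ) 1) (Metric.ball (0:ℂ) 1) := by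
    intro j z hz
    rw [Metric.mem_ball, dist_zero_right] at hz ⊢
    rw [norm_mul, hωnorm j, one_mul]
    exact hz
  have hmapsc : ∀ j : ℕ, Set.MapsTo (fun z => Complex.exp ((((j:ℝ)*ε' : ℝ):ℂ)*Complex.I) * z)
      (Metric.closedBall (0:ℂ) 1) (Metric.closedBall (0:ℂ) 1) := by
    intro j z hz
    rw [Metric.mem_closedBall, dist_zero_right] at hz ⊢
    rw [norm_mul, hωnorm j, one_mul]
    exact hz
  have hFdiff : ∀ j : ℕ, DifferentiableOn ℂ (F j) (Metric.ball (0:ℂ) 1) := by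
    intro j
    apply DifferentiableOn.sub _ (differentiableOn_const c0)
    exact ((hsG_analyticOn f hsummc).differentiableOn).comp
      ((differentiable_id.const_mul _).differentiableOn) (hmaps j)
  have hFcont : ∀ j : ℕ, ContinuousOn (F j) (Metric.closedBall (0:ℂ) 1) := by
    intro j
    apply ContinuousOn.sub _ continuousOn_const
    exact (hsG_contOn f hsummc).comp ((continuous_const.mul continuous_id).continuousOn) (hmapsc j)
  have hFanal : ∀ j : ℕ, AnalyticOnNhd ℂ (F j) (Metric.ball (0:ℂ) 1) := by
    intro j
    apply AnalyticOnNhd.sub _ analyticOnNhd_const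
    exact (hsG_analyticOn f hsummc).comp
      (analyticOnNhd_const.mul (analyticOnNhd_id)) (hmaps j)
  set H : ℂ → ℂ := fun z => ∏ j ∈ Finset.range N, F j z with hHdef
  have hHd : DiffContOnCl ℂ H (Metric.ball (0:ℂ) 1) := by
    constructor
    · exact prod_diffOn (fun j _ => hFdiff j)
    · rw [closure_ball (0:ℂ) one_ne_zero]
      exact prod_contOn (fun j _ => hFcont j)
  have hbound : ∀ z ∈ frontier (Metric.ball (0:ℂ) 1), ‖H z‖ ≤ 0 := by
    rw [frontier_ball (0:ℂ) one_ne_zero]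
    intro z hz
    have habs : ‖z‖ = 1 := by
      exact mem_sphere_zero_iff_norm.mp hz
    obtain ⟨j, hjN, m, hm1, hm2⟩ := covering_lemma (α := α) hε'0 hNδ (Complex.arg z)
    have hz_eq : z = Complex.exp ((Complex.arg z : ℂ) * Complex.I) := by
      conv_lhs => rw [← Complex.norm_mul_exp_arg_mul_I z]
      rw [habs, Complex.ofReal_one, one_mul]
    have hFj : F j z = 0 := by
      show hsG f (Complex.exp ((((j:ℝ)*ε' : ℝ):ℂ)*Complex.I) * z) - c0 = 0
      have hexp : Complex.exp ((((j:ℝ)*ε' : ℝ):ℂ)*Complex.I) * z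
          = Complex.exp (((Complex.arg z + (j:ℝ)*ε' + 2*π*(m:ℝ) : ℝ):ℂ)*Complex.I) := by
        conv_lhs => rw [hz_eq]
        rw [show (((Complex.arg z + (j:ℝ)*ε' + 2*π*(m:ℝ) : ℝ):ℂ)*Complex.I)
            = ((((j:ℝ)*ε' : ℝ):ℂ)*Complex.I + (Complex.arg z : ℂ) * Complex.I)
              + (m:ℂ) * (2*(π:ℂ)*Complex.I) by push_cast; ring]
        rw [Complex.exp_add, Complex.exp_int_mul_two_pi_mul_I, mul_one, Complex.exp_add]
      rw [hexp, harc _ ⟨hm1, by rw [hβdef, hαdef] at *; linarith⟩]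
      exact sub_self _
    have hH0 : H z = 0 := Finset.prod_eq_zero (Finset.mem_range.mpr hjN) hFj
    rw [hH0, norm_zero]
  have hH0 : ∀ z ∈ Metric.ball (0:ℂ) 1, H z = 0 := by
    intro z hz
    have := Complex.norm_le_of_forall_mem_frontier_norm_le Metric.isBounded_ball hHd hbound
      (subset_closure hz)
    exact norm_le_zero_iff.mp this
  obtain ⟨j, hjmem, hj0⟩ := analytic_prod_factor_zero Metric.isOpen_ball
    (convex_ball (0:ℂ) 1).isPreconnected ⟨0, by simp⟩ (Finset.range N) F
    (fun j _ => hFanal j) hH0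
  have hGconst : ∀ w ∈ Metric.ball (0:ℂ) 1, hsG f w = c0 := by
    intro w hw
    set e := Complex.exp ((((j:ℝ)*ε' : ℝ):ℂ)*Complex.I) with hedef
    have he : e ≠ 0 := Complex.exp_ne_zero _
    have hz : e⁻¹ * w ∈ Metric.ball (0:ℂ) 1 := by
      rw [Metric.mem_ball, dist_zero_right] at hw ⊢
      rw [norm_mul, norm_inv, hωnorm j, inv_one, one_mul]
      exact hw
    have h := hj0 _ hz
    have : hsG f (e * (e⁻¹ * w)) - c0 = 0 := h
    rw [← mul_assoc, mul_inv_cancel₀ he, one_mul] at this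
    exact sub_eq_zero.mp this
  have hG00 : hsG f 0 = 0 := by
    have h1 : hsG f 0 = hsC f 0 * (0:ℂ)^(0:ℕ) := by
      apply tsum_eq_single 0
      intro n hn
      rw [zero_pow hn, mul_zero]
    rw [h1]
    show (0:ℂ) * _ = 0
    rw [zero_mul]
  have hc0 : c0 = 0 := by
    rw [← hGconst 0 (by simp), hG00]
  have hGzero : (hsG f) =ᶠ[nhds (0:ℂ)] 0 := by
    filter_upwards [Metric.ball_mem_nhds (0:ℂ) one_pos] with z hz
    rw [hGconst z hz, hc0]
    rfl
  have hzero : HasFPowerSeriesAt 0 (FormalMultilinearSeries.ofScalars ℂ (hsC f)) 0 :=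
    (hsG_hasFPowerSeries f hsummc).hasFPowerSeriesAt.congr hGzero
  have hcoeff : ∀ n, hsC f n = 0 := by
    intro n
    have h := hzero.apply_eq_zero n 1
    rw [FormalMultilinearSeries.ofScalars_apply_eq] at h
    simpa using h
  have hfour : ∀ k : ℤ, fourierCoeff f k = 0 := by
    intro k
    rcases lt_or_ge k 0 with h|h
    · exact hhardy k h
    · lift k to ℕ using h
      have h := hcoeff (k+1)
      have hne : ((k:ℂ)+1) ≠ 0 := by norm_cast
      have : fourierCoeff f (k:ℤ) / ((k:ℂ)+1) = 0 := h
      rcases div_eq_zero_iff.mp this with h'|h'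
      · exact h'
      · exact absurd h' hne
  set fLp := hf.toLp f with hfLpdef
  have hfc : ∀ k : ℤ, fourierCoeff (⇑fLp) k = fourierCoeff f k := by
    intro k
    apply MeasureTheory.integral_congr_ae
    filter_upwards [hf.coeFn_toLp] with x hx
    rw [hx]
  have hsumf : HasSum (fun k : ℤ => fourierCoeff (⇑fLp) k • fourierLp 2 k) fLp :=
    hasSum_fourier_series_L2 fLp
  have hzero' : fLp = 0 := by
    have h0 : HasSum (fun _ : ℤ => (0 : Lp ℂ 2 haarAddCircle)) fLp := by
      have h := hsumf
      simp only [hfc, hfour, zero_smul] at h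
      exact h
    exact (h0.unique hasSum_zero)
  have h1 : ⇑fLp =ᵐ[haarAddCircle] f := hf.coeFn_toLp
  have h2 : ⇑fLp =ᵐ[haarAddCircle] 0 := by
    rw [hzero']
    exact Lp.coeFn_zero ℂ 2 haarAddCircle
  exact h1.symm.trans h2
end
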